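/- In the binary-sensing model, each coefficient estimate is unbiased: for every j, E[α̂_j] = α_j = ⟨f, φ_j⟩, where α̂_j = (c/n) Σ_{i=1}^n (φ_j*(X_i) / p_X(X_i)) B_i. -/

import Mathlib

open MeasureTheory ProbabilityTheory Filter
open scoped ENNReal Topology

noncomputable section

/-- Sign function: `+1` if `u > 0` and `-1` otherwise. -/
def sgn' (u : ℝ) : ℝ := if 0 < u then 1 else -1

/-- Binary-quantized observation of sensor `i`: `B i = sgn (f (X i) + Z i - T i)`. -/
def obsB {E Ω : Type*} (f : E → ℝ) (X : ℕ → Ω → E) (Z T : ℕ → Ω → ℝ)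
    (i : ℕ) (ω : Ω) : ℝ :=
  sgn' (f (X i ω) + Z i ω - T i ω)

/-- Estimate of the `j`-th coefficient from the first `n` sensors:
`α̂_j = (c/n) ∑_{i<n} (φ_j(X_i))^* / p_X(X_i) * B_i`. -/
def alphaHat {E Ω : Type*} (c : ℝ) (pX : E → ℝ) (φ : ℕ → E → ℂ) (f : E → ℝ)
    (X : ℕ → Ω → E) (Z T : ℕ → Ω → ℝ) (n j : ℕ) (ω : Ω) : ℂ :=
  ((c : ℂ) / (n : ℂ)) * ∑ i ∈ Finset.range n,
    (starRingEnd ℂ) (φ j (X i ω)) / (pX (X i ω) : ℂ) * (obsB f X Z T i ω : ℂ)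

/-- The `j`-th coefficient of the field `f`: `α_j = ⟨f, φ_j⟩ = ∫_D f (φ_j)^*`. -/
def coeff {E : Type*} [MeasureSpace E] (D : Set E) (f : E → ℝ) (φ : ℕ → E → ℂ)
    (j : ℕ) : ℂ :=
  ∫ x in D, (f x : ℂ) * (starRingEnd ℂ) (φ j x)

/-- The `m`-term field estimate `f̂_{n,m} = ∑_{j<m} α̂_j φ_j`. -/
def fieldEst {E Ω : Type*} (c : ℝ) (pX : E → ℝ) (φ : ℕ → E → ℂ) (f : E → ℝ)
    (X : ℕ → Ω → E) (Z T : ℕ → Ω → ℝ) (n m : ℕ) (x : E) (ω : Ω) : ℂ :=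
  ∑ j ∈ Finset.range m, alphaHat c pX φ f X Z T n j ω * φ j x

/-- The `m`-term approximation `f_m = ∑_{j<m} α_j φ_j`. -/
def mApprox {E : Type*} [MeasureSpace E] (D : Set E) (f : E → ℝ) (φ : ℕ → E → ℂ)
    (m : ℕ) (x : E) : ℂ :=
  ∑ j ∈ Finset.range m, coeff D f φ j * φ j x

/-- The integrated mean squared error `E[‖f - f̂_{n,m}‖²]`. -/
def intMSE {E Ω : Type*} [MeasureSpace E] [MeasurableSpace Ω] (P : Measure Ω)
    (D : Set E) (c : ℝ) (pX : E → ℝ) (φ : ℕ → E → ℂ) (f : E → ℝ)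
    (X : ℕ → Ω → E) (Z T : ℕ → Ω → ℝ) (n m : ℕ) : ℝ :=
  ∫ ω, (∫ x in D, ‖(f x : ℂ) - fieldEst c pX φ f X Z T n m x ω‖ ^ 2) ∂P

/-- The `m`-term approximation error `ε[f,m] = ∑_{j≥m} |α_j|²`. -/
def tailErr {E : Type*} [MeasureSpace E] (D : Set E) (f : E → ℝ) (φ : ℕ → E → ℂ)
    (m : ℕ) : ℝ :=
  ∑' j : ℕ, ‖coeff D f φ (m + j)‖ ^ 2

/-- The deployment distribution: density `p_X` (w.r.t. Lebesgue measure) on `D`. -/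
def deployLaw {E : Type*} [MeasureSpace E] (D : Set E) (pX : E → ℝ) : Measure E :=
  (volume.restrict D).withDensity fun x => ENNReal.ofReal (pX x)

/-- The threshold distribution: uniform on `[-c, c]`. -/
def threshLaw (c : ℝ) : Measure ℝ :=
  (ENNReal.ofReal (1 / (2 * c))) • volume.restrict (Set.Icc (-c) c)

end

/-! A threshold drawn uniformly from `[-c, c]` dithers the sign: `E_T[sgn (u - T)] = u / c` whenever
`|u| ≤ c`. Since `|f| ≤ a` and `|Z| ≤ b`, this applies to `u = f(X_i) + Z_i`, and the zero-mean noise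
then averages out, so `E[B_i | X_i] = f(X_i) / c`. Dividing by the density `p_X` turns the
expectation over `X_i` into the integral over `D`, so every summand of `α̂_j` has mean `α_j / c`. -/

open Set

@[fun_prop]
lemma measurable_sgn' : Measurable sgn' :=
  Measurable.ite measurableSet_Ioi measurable_const measurable_const

lemma abs_sgn'_le_one (u : ℝ) : |sgn' u| ≤ 1 := by
  unfold sgn'; split <;> simp

lemma sgn'_sub_eq_indicator (u t : ℝ) : sgn' (u - t) = (Iio u).indicator (fun _ => 2) t - 1 := by
  by_cases h : t < u <;> norm_num [sgn', h]

instance (c : ℝ) : IsFiniteMeasure (threshLaw c) :=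
  Measure.smul_finite _ ENNReal.ofReal_ne_top

lemma integral_sgn'_sub_threshLaw {c u : ℝ} (hc : 0 < c) (hu : u ∈ Icc (-c) c) :
    ∫ t, sgn' (u - t) ∂threshLaw c = u / c := by
  have hIco : Iio u ∩ Icc (-c) c = Ico (-c) u := by
    ext t
    simp only [mem_inter_iff, mem_Iio, mem_Icc, mem_Ico]
    constructor
    · rintro ⟨htu, hct, -⟩; exact ⟨hct, htu⟩
    · rintro ⟨hct, htu⟩; exact ⟨htu, hct, htu.le.trans hu.2⟩
  simp_rw [threshLaw, integral_smul_measure, sgn'_sub_eq_indicator]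
  rw [integral_sub ((integrable_const 2).indicator measurableSet_Iio) (integrable_const 1),
    integral_indicator measurableSet_Iio, Measure.restrict_restrict measurableSet_Iio, hIco,
    setIntegral_const, integral_const, measureReal_def, measureReal_def, Real.volume_Ico,
    Measure.restrict_apply_univ, Real.volume_Icc, ENNReal.toReal_ofReal (by positivity),
    ENNReal.toReal_ofReal (by linarith [hu.1]), ENNReal.toReal_ofReal (by linarith), smul_eq_mul,
    smul_eq_mul, smul_eq_mul]
  field_simp
  ring

lemma integral_sgn'_add_sub_prod_threshLaw {μZ : Measure ℝ} [IsProbabilityMeasure μZ] {c u : ℝ}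
    (hc : 0 < c) (hZ : ∀ᵐ z ∂μZ, u + z ∈ Icc (-c) c) (hZmean : ∫ z, z ∂μZ = 0) :
    ∫ y, sgn' (u + y.1 - y.2) ∂μZ.prod (threshLaw c) = u / c := by
  have hint : Integrable (fun y : ℝ × ℝ => sgn' (u + y.1 - y.2)) (μZ.prod (threshLaw c)) :=
    .of_bound (measurable_sgn'.comp (by fun_prop)).aestronglyMeasurable 1
      (.of_forall fun y => abs_sgn'_le_one _)
  have hZint : Integrable (fun z => z) μZ := by
    refine .of_bound aestronglyMeasurable_id (|u| + c) ?_
    filter_upwards [hZ] with z hz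
    have hz' : |z| ≤ |u + z| + |u| := by simpa using abs_sub (u + z) u
    rw [Real.norm_eq_abs]
    linarith [abs_le.2 ⟨hz.1, hz.2⟩]
  rw [integral_prod _ hint]
  calc ∫ z, ∫ t, sgn' (u + z - t) ∂threshLaw c ∂μZ = ∫ z, (u + z) / c ∂μZ :=
        integral_congr_ae (hZ.mono fun z hz => integral_sgn'_sub_threshLaw hc hz)
    _ = u / c := by
        simp_rw [add_div]
        rw [integral_add (integrable_const _) (hZint.div_const c), integral_const, integral_div,
          hZmean]
        simp

section Density

variable {E : Type*} [MeasureSpace E] {D : Set E} {pX : E → ℝ}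

lemma toNNReal_smul_div_ae_eq (hD : MeasurableSet D) (hpXpos : ∀ x ∈ D, 0 < pX x) (g : E → ℂ) :
    (fun x => (pX x).toNNReal • (g x / (pX x : ℂ))) =ᵐ[volume.restrict D] g := by
  filter_upwards [ae_restrict_mem hD] with x hx
  have hpX : (pX x : ℂ) ≠ 0 := Complex.ofReal_ne_zero.2 (hpXpos x hx).ne'
  rw [NNReal.smul_def, Real.coe_toNNReal _ (hpXpos x hx).le, Complex.real_smul]
  field_simp

lemma integrable_deployLaw_div (hD : MeasurableSet D) (hpXmeas : Measurable pX)
    (hpXpos : ∀ x ∈ D, 0 < pX x) {g : E → ℂ} (hg : Integrable g (volume.restrict D)) :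
    Integrable (fun x => g x / (pX x : ℂ)) (deployLaw D pX) := by
  change Integrable _ ((volume.restrict D).withDensity fun x => ((pX x).toNNReal : ℝ≥0∞))
  rw [integrable_withDensity_iff_integrable_smul hpXmeas.real_toNNReal]
  exact hg.congr (toNNReal_smul_div_ae_eq hD hpXpos g).symm

lemma integral_deployLaw_div (hD : MeasurableSet D) (hpXmeas : Measurable pX)
    (hpXpos : ∀ x ∈ D, 0 < pX x) (g : E → ℂ) :
    ∫ x, g x / (pX x : ℂ) ∂deployLaw D pX = ∫ x in D, g x := by
  change ∫ x, _ ∂(volume.restrict D).withDensity (fun x => ((pX x).toNNReal : ℝ≥0∞)) = _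
  rw [integral_withDensity_eq_integral_smul hpXmeas.real_toNNReal]
  exact integral_congr_ae (toNNReal_smul_div_ae_eq hD hpXpos g)

end Density

section SensorTerm

variable {E : Type*} [MeasureSpace E] {D : Set E} {pX : E → ℝ}
  {ψ : E → ℂ} {f : E → ℝ}

/-- The summand of `alphaHat` for a sensor at location `p.1` with noise `p.2.1` and
threshold `p.2.2`. -/
noncomputable def sensorTerm (pX : E → ℝ) (ψ : E → ℂ) (f : E → ℝ) (p : E × ℝ × ℝ) : ℂ :=
  starRingEnd ℂ (ψ p.1) / (pX p.1 : ℂ) * (sgn' (f p.1 + p.2.1 - p.2.2) : ℂ)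

lemma integrable_sensorTerm (hD : MeasurableSet D) (hpXmeas : Measurable pX)
    (hpXpos : ∀ x ∈ D, 0 < pX x) (hψmeas : Measurable ψ) (hψ : Integrable ψ (volume.restrict D))
    (hfmeas : Measurable f) (ν : Measure (ℝ × ℝ)) [IsFiniteMeasure ν] :
    Integrable (sensorTerm pX ψ f) ((deployLaw D pX).prod ν) := by
  have hψconj : Integrable (fun x => starRingEnd ℂ (ψ x)) (volume.restrict D) :=
    hψ.congr' hψ.aestronglyMeasurable.star (.of_forall fun x => by simp)
  have hweight : Integrable (fun x => starRingEnd ℂ (ψ x) / (pX x : ℂ)) (deployLaw D pX) :=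
    integrable_deployLaw_div hD hpXmeas hpXpos hψconj
  refine (hweight.norm.mul_prod (integrable_const (1 : ℝ))).mono' ?_ (.of_forall fun p => ?_)
  · have : Measurable (sensorTerm pX ψ f) := by unfold sensorTerm; fun_prop
    exact this.aestronglyMeasurable
  · simp only [sensorTerm, norm_mul, Complex.norm_real, Real.norm_eq_abs, mul_one]
    exact mul_le_of_le_one_right (norm_nonneg _) (abs_sgn'_le_one _)

instance [SFinite (volume : Measure E)] : SFinite (deployLaw D pX) := by
  unfold deployLaw; infer_instance

lemma integral_sensorTerm [SFinite (volume : Measure E)] (hD : MeasurableSet D)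
    (hpXmeas : Measurable pX) (hpXpos : ∀ x ∈ D, 0 < pX x) (hψmeas : Measurable ψ)
    (hψ : Integrable ψ (volume.restrict D)) (hfmeas : Measurable f) {μZ : Measure ℝ}
    [IsProbabilityMeasure μZ] {c : ℝ} (hc : 0 < c)
    (hrange : ∀ x ∈ D, ∀ᵐ z ∂μZ, f x + z ∈ Icc (-c) c) (hZmean : ∫ z, z ∂μZ = 0) :
    ∫ p, sensorTerm pX ψ f p ∂(deployLaw D pX).prod (μZ.prod (threshLaw c))
      = (∫ x in D, (f x : ℂ) * starRingEnd ℂ (ψ x)) / c := by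
  have hmemD : ∀ᵐ x ∂deployLaw D pX, x ∈ D :=
    (withDensity_absolutelyContinuous _ _).ae_le (ae_restrict_mem hD)
  rw [integral_prod _ (integrable_sensorTerm hD hpXmeas hpXpos hψmeas hψ hfmeas _)]
  calc ∫ x, ∫ y, sensorTerm pX ψ f (x, y) ∂μZ.prod (threshLaw c) ∂deployLaw D pX
      = ∫ x, (f x : ℂ) * starRingEnd ℂ (ψ x) / c / (pX x : ℂ) ∂deployLaw D pX := by
        refine integral_congr_ae (hmemD.mono fun x hx => ?_)
        simp only [sensorTerm]
        rw [integral_const_mul, integral_complex_ofReal,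
          integral_sgn'_add_sub_prod_threshLaw hc (hrange x hx) hZmean]
        push_cast
        ring
    _ = _ := by rw [integral_deployLaw_div hD hpXmeas hpXpos, integral_div]

lemma integral_alphaHat {Ω : Type*} [MeasurableSpace Ω] {P : Measure Ω} {c : ℝ} {φ : ℕ → E → ℂ}
    {X : ℕ → Ω → E} {Z T : ℕ → Ω → ℝ} {ρ : Measure (E × ℝ × ℝ)} {j : ℕ}
    (hmeas : ∀ i, AEMeasurable (fun ω => (X i ω, Z i ω, T i ω)) P)
    (hlaw : ∀ i, P.map (fun ω => (X i ω, Z i ω, T i ω)) = ρ)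
    (hint : Integrable (sensorTerm pX (φ j) f) ρ) {n : ℕ} (hn : n ≠ 0) :
    ∫ ω, alphaHat c pX φ f X Z T n j ω ∂P = c * ∫ p, sensorTerm pX (φ j) f p ∂ρ := by
  have hintP : ∀ i, Integrable (fun ω => sensorTerm pX (φ j) f (X i ω, Z i ω, T i ω)) P :=
    fun i => (hlaw i ▸ hint).comp_aemeasurable (hmeas i)
  have hmean : ∀ i, ∫ ω, sensorTerm pX (φ j) f (X i ω, Z i ω, T i ω) ∂P
      = ∫ p, sensorTerm pX (φ j) f p ∂ρ := fun i => by
    rw [← integral_map (hmeas i) (hlaw i ▸ hint.aestronglyMeasurable), hlaw i]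
  change ∫ ω, (c : ℂ) / n * ∑ i ∈ Finset.range n,
    sensorTerm pX (φ j) f (X i ω, Z i ω, T i ω) ∂P = _
  rw [integral_const_mul, integral_finsetSum _ fun i _ => hintP i]
  simp only [hmean, Finset.sum_const, Finset.card_range, nsmul_eq_mul]
  field_simp

end SensorTerm

theorem stmt1_general
    {d : ℕ} {D : Set (Fin d → ℝ)} (hDcomp : IsCompact D)
    (hDfin : volume D < ⊤)
    {a b c : ℝ} (ha : 0 < a) (hb : 0 < b) (hc : c = a + b)
    {f : (Fin d → ℝ) → ℝ} (hfmeas : Measurable f)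
    (hfbd : ∀ x ∈ D, f x ∈ Set.Icc (-a) a)
    {pX : (Fin d → ℝ) → ℝ} (hpXmeas : Measurable pX)
    (hpXpos : ∀ x ∈ D, 0 < pX x)
    {φ : ℕ → (Fin d → ℝ) → ℂ} (hφmeas : ∀ j, Measurable (φ j))
    (hφL2 : ∀ j, MemLp (φ j) 2 (volume.restrict D))
    {Ω : Type*} [MeasurableSpace Ω] (P : Measure Ω)
    (X : ℕ → Ω → (Fin d → ℝ)) (Z T : ℕ → Ω → ℝ)
    (hXmeas : ∀ i, Measurable (X i)) (hZmeas : ∀ i, Measurable (Z i))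
    (hTmeas : ∀ i, Measurable (T i))
    (μZ : Measure ℝ) [IsProbabilityMeasure μZ]
    (hZmean : (∫ z, z ∂μZ) = 0) (hZsupp : μZ (Set.Icc (-b) b)ᶜ = 0)
    (hlaw : ∀ i, Measure.map (fun ω => (X i ω, Z i ω, T i ω)) P =
      (deployLaw D pX).prod (μZ.prod (threshLaw c)))
    (n : ℕ) (hn : 0 < n) :
    ∀ j : ℕ, (∫ ω, alphaHat c pX φ f X Z T n j ω ∂P) = coeff D f φ j := by
  intro j
  have hD : MeasurableSet D := hDcomp.isClosed.measurableSet
  have hc0 : 0 < c := hc ▸ add_pos ha hb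
  have : IsFiniteMeasure (volume.restrict D) := ⟨by rwa [Measure.restrict_apply_univ]⟩
  have hψ : Integrable (φ j) (volume.restrict D) := (hφL2 j).integrable one_le_two
  have hrange : ∀ x ∈ D, ∀ᵐ z ∂μZ, f x + z ∈ Icc (-c) c := fun x hx =>
    (show ∀ᵐ z ∂μZ, z ∈ Icc (-b) b from mem_ae_iff.2 hZsupp).mono fun z hz =>
      ⟨by linarith [(hfbd x hx).1, hz.1], by linarith [(hfbd x hx).2, hz.2]⟩
  rw [integral_alphaHat
      (fun i => ((hXmeas i).prodMk ((hZmeas i).prodMk (hTmeas i))).aemeasurable) hlaw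
      (integrable_sensorTerm hD hpXmeas hpXpos (hφmeas j) hψ hfmeas _) hn.ne',
    integral_sensorTerm hD hpXmeas hpXpos (hφmeas j) hψ hfmeas hc0 hrange hZmean, coeff]
  exact mul_div_cancel₀ _ (Complex.ofReal_ne_zero.2 hc0.ne')

/-- **Unbiasedness of the coefficient estimates.**
In the binary-sensing model, `E[α̂_j] = α_j = ⟨f, φ_j⟩` for every `j`. -/
theorem stmt1
    {d : ℕ} {D : Set (Fin d → ℝ)} (hDcomp : IsCompact D)
    (hDpos : 0 < volume D) (hDfin : volume D < ⊤)
    {a b c : ℝ} (ha : 0 < a) (hb : 0 < b) (hc : c = a + b)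
    {f : (Fin d → ℝ) → ℝ} (hfmeas : Measurable f)
    (hfbd : ∀ x ∈ D, f x ∈ Set.Icc (-a) a)
    {pX : (Fin d → ℝ) → ℝ} (hpXmeas : Measurable pX)
    (hpXpos : ∀ x ∈ D, 0 < pX x) (hpXone : (∫ x in D, pX x) = 1)
    {φ : ℕ → (Fin d → ℝ) → ℂ} (hφmeas : ∀ j, Measurable (φ j))
    (hφL2 : ∀ j, MemLp (φ j) 2 (volume.restrict D))
    (hON : ∀ j k, (∫ x in D, φ j x * (starRingEnd ℂ) (φ k x)) = if j = k then 1 else 0)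
    (hComplete : ∀ g : (Fin d → ℝ) → ℂ, Measurable g → MemLp g 2 (volume.restrict D) →
      (∑' j : ℕ, ‖∫ x in D, g x * (starRingEnd ℂ) (φ j x)‖ ^ 2) = ∫ x in D, ‖g x‖ ^ 2)
    {Ω : Type*} [MeasurableSpace Ω] (P : Measure Ω) [IsProbabilityMeasure P]
    (X : ℕ → Ω → (Fin d → ℝ)) (Z T : ℕ → Ω → ℝ)
    (hXmeas : ∀ i, Measurable (X i)) (hZmeas : ∀ i, Measurable (Z i))
    (hTmeas : ∀ i, Measurable (T i))
    (μZ : Measure ℝ) [IsProbabilityMeasure μZ]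
    (hZmean : (∫ z, z ∂μZ) = 0) (hZsupp : μZ (Set.Icc (-b) b)ᶜ = 0)
    (hlaw : ∀ i, Measure.map (fun ω => (X i ω, Z i ω, T i ω)) P =
      (deployLaw D pX).prod (μZ.prod (threshLaw c)))
    (hiid : iIndepFun (fun i ω => (X i ω, Z i ω, T i ω)) P)
    (n : ℕ) (hn : 0 < n) :
    ∀ j : ℕ, (∫ ω, alphaHat c pX φ f X Z T n j ω ∂P) = coeff D f φ j :=
  stmt1_general hDcomp hDfin ha hb hc hfmeas hfbd hpXmeas hpXpos hφmeas hφL2 P X Z T hXmeas hZmeas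
    hTmeas μZ hZmean hZsupp hlaw n hn
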